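/- Let M be a graded R-module and {K_i : i ∈ I} a family of graded submodules of M. Then ∩_{i∈I} qp-V^g_M(K_i) = qp-V^g_M((Σ_{i∈I}(K_i :_R M))M). -/

import Mathlib

section ModuleDefs

variable {G R M : Type*} [AddGroup G] [DecidableEq G] [CommRing R]
  [AddCommGroup M] [Module R M]
  (𝒜 : G → AddSubgroup R) [GradedRing 𝒜]
  (ℳ : G → AddSubgroup M) [DirectSum.Decomposition ℳ] [SetLike.GradedSMul 𝒜 ℳ]

def gradedRadical (I : Ideal R) : Set R :=
  {r : R | ∀ g : G, ∃ n : ℕ, 0 < n ∧ (DirectSum.decompose 𝒜 r g : R) ^ n ∈ I}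

/-- A graded submodule: contains the homogeneous components of all its elements. -/
def IsGradedSubmodule (N : Submodule R M) : Prop :=
  ∀ (g : G) ⦃m : M⦄, m ∈ N → (DirectSum.decompose ℳ m g : M) ∈ N

def IsGradedPrimeIdeal (P : Ideal R) : Prop :=
  P ≠ ⊤ ∧ (∀ (g : G) ⦃r : R⦄, r ∈ P → (DirectSum.decompose 𝒜 r g : R) ∈ P) ∧
    ∀ ⦃r s : R⦄, SetLike.IsHomogeneousElem 𝒜 r → SetLike.IsHomogeneousElem 𝒜 s →
      r * s ∈ P → r ∈ P ∨ s ∈ P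

/-- A graded prime submodule `P`: proper graded, and `r • m ∈ P` for homogeneous `r, m`
implies `m ∈ P` or `r ∈ (P :_R M)`. -/
def IsGradedPrimeSubmodule (P : Submodule R M) : Prop :=
  P ≠ ⊤ ∧ IsGradedSubmodule ℳ P ∧
    ∀ ⦃r : R⦄ ⦃m : M⦄, SetLike.IsHomogeneousElem 𝒜 r → SetLike.IsHomogeneousElem ℳ m →
      r • m ∈ P → m ∈ P ∨ r ∈ P.colon ⊤

/-- The graded radical `Gr_M(Q)` of a submodule: the intersection of all graded prime
submodules containing `Q` (equal to `M` if there are none). -/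
def gradedRadicalSubmodule (Q : Submodule R M) : Submodule R M :=
  sInf {P : Submodule R M | IsGradedPrimeSubmodule 𝒜 ℳ P ∧ Q ≤ P}

/-- A graded quasi-primary submodule `Q`: proper graded, and `r • m ∈ Q` for homogeneous
`r, m` implies `r ∈ Gr((Q :_R M))` or `m ∈ Gr_M(Q)`. -/
def IsGradedQuasiPrimarySubmodule (Q : Submodule R M) : Prop :=
  Q ≠ ⊤ ∧ IsGradedSubmodule ℳ Q ∧
    ∀ ⦃r : R⦄ ⦃m : M⦄, SetLike.IsHomogeneousElem 𝒜 r → SetLike.IsHomogeneousElem ℳ m →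
      r • m ∈ Q → r ∈ gradedRadical 𝒜 (Q.colon ⊤) ∨ m ∈ gradedRadicalSubmodule 𝒜 ℳ Q

/-- `K` satisfies the graded primeful property if every graded prime ideal containing
`(K :_R M)` is of the form `(P :_R M)` for a graded prime submodule `P ⊇ K`. -/
def SatisfiesGradedPrimeful (K : Submodule R M) : Prop :=
  ∀ p : Ideal R, IsGradedPrimeIdeal 𝒜 p → K.colon ⊤ ≤ p →
    ∃ P : Submodule R M, IsGradedPrimeSubmodule 𝒜 ℳ P ∧ K ≤ P ∧ P.colon ⊤ = p

/-- The graded quasi-primary spectrum of `M`: the graded quasi-primary submodules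
satisfying the graded primeful property. -/
def qpSpec : Set (Submodule R M) :=
  {Q : Submodule R M | IsGradedQuasiPrimarySubmodule 𝒜 ℳ Q ∧ SatisfiesGradedPrimeful 𝒜 ℳ Q}

/-- The variety `qp-V^g_M(K) = { Q ∈ qp.Spec_g(M) : Gr((Q:_R M)) ⊇ Gr((K:_R M)) }`. -/
def qpV (K : Submodule R M) : Set (qpSpec 𝒜 ℳ) :=
  {Q : qpSpec 𝒜 ℳ | gradedRadical 𝒜 (K.colon ⊤) ⊆ gradedRadical 𝒜 (Q.1.colon ⊤)}

/-- The quasi-Zariski topology on `qp.Spec_g(M)`, generated by the complements of the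
varieties of graded submodules. -/
def qpZariski : TopologicalSpace (qpSpec 𝒜 ℳ) :=
  TopologicalSpace.generateFrom
    {U : Set (qpSpec 𝒜 ℳ) | ∃ K : Submodule R M, IsGradedSubmodule ℳ K ∧ U = (qpV 𝒜 ℳ K)ᶜ}

/-!
If `Gr((K_i :_R M)) ⊆ Gr((Q :_R M))` for all `i`, then `I := Σ_i (K_i :_R M)` lies in every
graded prime `p ⊇ (Q :_R M)`. The primeful property of `Q` writes `p = (P :_R M)`, so `I M ≤ P`
and hence `(I M :_R M) ≤ p`. As `Gr((Q :_R M))` is cut out by the graded primes containing the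
graded ideal `(Q :_R M)` (the homogeneous core of a prime avoiding the powers of a component is
such a graded prime), this gives `Gr((I M :_R M)) ⊆ Gr((Q :_R M))`. The reverse inclusion is
monotonicity of `Gr`, since `(K_i :_R M) ≤ (I M :_R M)`.
-/

open DirectSum

lemma gradedRadical_mono {J J' : Ideal R} (h : J ≤ J') :
    gradedRadical 𝒜 J ⊆ gradedRadical 𝒜 J' := fun _ hr g =>
  let ⟨n, hn, hJ⟩ := hr g
  ⟨n, hn, h hJ⟩

lemma Ideal.IsHomogeneous.subset_gradedRadical {J : Ideal R} (hJ : J.IsHomogeneous 𝒜) :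
    (J : Set R) ⊆ gradedRadical 𝒜 J := fun _ hr g =>
  ⟨1, one_pos, by rw [pow_one]; exact hJ g hr⟩

lemma IsGradedPrimeIdeal.mem_of_pow_mem {p : Ideal R} (hp : IsGradedPrimeIdeal 𝒜 p) {x : R}
    (hx : SetLike.IsHomogeneousElem 𝒜 x) {n : ℕ} (hn : x ^ n ∈ p) : x ∈ p := by
  induction n with
  | zero => exact absurd ((Ideal.eq_top_iff_one p).2 (pow_zero x ▸ hn)) hp.1
  | succ n ih =>
    rw [pow_succ] at hn
    exact (hp.2.2 ((SetLike.homogeneousSubmonoid 𝒜).pow_mem hx n) hx hn).elim ih id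

lemma IsGradedPrimeIdeal.gradedRadical_subset {p : Ideal R} (hp : IsGradedPrimeIdeal 𝒜 p) :
    gradedRadical 𝒜 p ⊆ p := fun _ hr =>
  (Ideal.IsHomogeneous.mem_iff 𝒜 hp.2.1).2 fun g =>
    let ⟨_, _, hn⟩ := hr g
    hp.mem_of_pow_mem 𝒜 ⟨g, SetLike.coe_mem _⟩ hn

lemma Ideal.IsPrime.isGradedPrimeIdeal_homogeneousCore {p : Ideal R} (hp : p.IsPrime) :
    IsGradedPrimeIdeal 𝒜 (p.homogeneousCore 𝒜).toIdeal := by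
  refine ⟨ne_top_of_le_ne_top hp.ne_top (p.toIdeal_homogeneousCore_le 𝒜),
    (p.homogeneousCore 𝒜).isHomogeneous, fun _ _ hr hs hrs => ?_⟩
  exact (hp.mem_or_mem (p.toIdeal_homogeneousCore_le 𝒜 hrs)).imp
    (Ideal.mem_homogeneousCore_of_homogeneous_of_mem hr)
    (Ideal.mem_homogeneousCore_of_homogeneous_of_mem hs)

lemma Ideal.IsHomogeneous.exists_isGradedPrimeIdeal_le_notMem {J : Ideal R}
    (hJ : J.IsHomogeneous 𝒜) {x : R} (hx : ∀ n : ℕ, x ^ n ∉ J) :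
    ∃ p : Ideal R, IsGradedPrimeIdeal 𝒜 p ∧ J ≤ p ∧ x ∉ p := by
  obtain ⟨q, hq, hJq, hdisj⟩ := Ideal.exists_le_prime_disjoint J (Submonoid.powers x)
    (Set.disjoint_right.2 fun _ ⟨n, hn⟩ => hn ▸ hx n)
  refine ⟨_, hq.isGradedPrimeIdeal_homogeneousCore 𝒜, ?_, fun hxq => ?_⟩
  · rw [← hJ.toIdeal_homogeneousCore_eq_self]
    exact Ideal.homogeneousCore_mono 𝒜 hJq
  · exact Set.disjoint_left.1 hdisj (q.toIdeal_homogeneousCore_le 𝒜 hxq)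
      (Submonoid.mem_powers x)

lemma Ideal.IsHomogeneous.gradedRadical_subset_of_forall_le {J J' : Ideal R}
    (hJ : J.IsHomogeneous 𝒜) (h : ∀ p, IsGradedPrimeIdeal 𝒜 p → J ≤ p → J' ≤ p) :
    gradedRadical 𝒜 J' ⊆ gradedRadical 𝒜 J := by
  intro r hr g
  by_contra! hpow
  obtain ⟨p, hp, hJp, hrp⟩ := hJ.exists_isGradedPrimeIdeal_le_notMem 𝒜
    (x := (decompose 𝒜 r g : R)) fun n hn =>
      hpow (n + 1) n.succ_pos (by rw [pow_succ]; exact J.mul_mem_right _ hn)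
  exact hrp (hp.2.1 g (hp.gradedRadical_subset 𝒜 (gradedRadical_mono 𝒜 (h p hp hJp) hr)))

lemma coe_decompose_smul_add_of_right_mem {m : M} {j : G} (hm : m ∈ ℳ j) (r : R) (g : G) :
    (decompose ℳ (r • m) (g + j) : M) = (decompose 𝒜 r g : R) • m := by
  induction r using DirectSum.Decomposition.inductionOn 𝒜 with
  | zero => simp
  | @homogeneous d c =>
    have hcm : (c : R) • m ∈ ℳ (d + j) := SetLike.GradedSMul.smul_mem c.2 hm
    by_cases hg : g = d
    · subst hg
      rw [decompose_of_mem_same ℳ hcm, decompose_of_mem_same 𝒜 c.2]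
    · rw [decompose_of_mem_ne ℳ hcm (fun h => hg (add_right_cancel h).symm),
        decompose_of_mem_ne 𝒜 c.2 (fun h => hg h.symm), zero_smul]
  | add a b ha hb =>
    simp only [add_smul, decompose_add, DirectSum.add_apply, AddSubgroup.coe_add, ha, hb]

lemma IsGradedSubmodule.colon_isHomogeneous {N : Submodule R M} (hN : IsGradedSubmodule ℳ N) :
    (N.colon ⊤).IsHomogeneous 𝒜 := by
  intro g r hr
  rw [Submodule.mem_colon] at hr ⊢
  intro m _
  induction m using DirectSum.Decomposition.inductionOn ℳ with
  | zero => rw [smul_zero]; exact N.zero_mem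
  | homogeneous c =>
    rw [← coe_decompose_smul_add_of_right_mem 𝒜 ℳ c.2 r g]
    exact hN _ (hr c trivial)
  | add a b ha hb => rw [smul_add]; exact N.add_mem (ha trivial) (hb trivial)

/-- For a family of graded submodules `K i` of `M`,
`⋂ i, qp-V^g_M(K i) = qp-V^g_M((Σ_i (K_i :_R M)) M)`. -/
theorem qpV_iInter {ι : Type*} (K : ι → Submodule R M)
    (hK : ∀ i, IsGradedSubmodule ℳ (K i)) :
    ⋂ i, qpV 𝒜 ℳ (K i) =
      qpV 𝒜 ℳ ((⨆ i, (K i).colon ⊤) • (⊤ : Submodule R M)) := by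
  ext ⟨Q, hQ⟩
  simp only [qpV, Set.mem_iInter, Set.mem_ofPred_eq]
  constructor
  · intro h
    refine (hQ.1.2.1.colon_isHomogeneous 𝒜).gradedRadical_subset_of_forall_le 𝒜
      fun p hp hQp => ?_
    obtain ⟨P, -, -, rfl⟩ := hQ.2 p hp hQp
    have hI : ⨆ i, (K i).colon ⊤ ≤ P.colon ⊤ := iSup_le fun i r hr =>
      hp.gradedRadical_subset 𝒜 <| gradedRadical_mono 𝒜 hQp <|
        h i <| ((hK i).colon_isHomogeneous 𝒜).subset_gradedRadical 𝒜 hr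
    have hIP : (⨆ i, (K i).colon ⊤) • (⊤ : Submodule R M) ≤ P :=
      Submodule.smul_le.2 fun r hr m _ => Submodule.mem_colon.1 (hI hr) m trivial
    exact Submodule.colon_mono hIP subset_rfl
  · intro h i
    refine (gradedRadical_mono 𝒜 fun r hr => ?_).trans h
    exact Submodule.mem_colon.2 fun m _ =>
      Submodule.smul_mem_smul (le_iSup (fun i => (K i).colon ⊤) i hr) trivial

end ModuleDefs
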